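/- arXiv:1908.06250 — 2 statements merged into one kernel-verified Lean document; each statement's English description precedes it below -/
import Mathlib

section
/- Let G be a strongly connected signed digraph. Then G is structurally unbalanced if and only if the improved Laplacian potential function Φ_e is positive definite, i.e., Φ_e(x) > 0 for every nonzero x ∈ ℝⁿ (equivalently, Φ_e(x) ≥ 0 for all x and Φ_e(x) = 0 implies x = 0). -/
open Matrix BigOperators Filter

/-- In-degree of node `i`: sum of absolute values of the `i`-th row of `A`. -/
noncomputable def inDeg {n : ℕ} (A : Matrix (Fin n) (Fin n) ℝ) (i : Fin n) : ℝ := ∑ j, |A i j|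

/-- Laplacian `L = Δ − A` of the signed digraph with adjacency matrix `A`. -/
noncomputable def lapOf {n : ℕ} (A : Matrix (Fin n) (Fin n) ℝ) : Matrix (Fin n) (Fin n) ℝ :=
  Matrix.diagonal (inDeg A) - A

/-- Laplacian `L̄ = Δ − Ā` of the induced unsigned digraph. -/
noncomputable def lapBar {n : ℕ} (A : Matrix (Fin n) (Fin n) ℝ) : Matrix (Fin n) (Fin n) ℝ :=
  Matrix.diagonal (inDeg A) - Matrix.of (fun i j => |A i j|)

/-- `det(L̄_ii)`: determinant of `L̄` with its `i`-th row and column removed. -/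
noncomputable def minorDet {n : ℕ} (A : Matrix (Fin n) (Fin n) ℝ) (i : Fin n) : ℝ :=
  Matrix.det ((lapBar A).submatrix (fun k : {j : Fin n // j ≠ i} => (k : Fin n))
    (fun k : {j : Fin n // j ≠ i} => (k : Fin n)))

/-- `W = diag(det(L̄_11), …, det(L̄_nn))`. -/
noncomputable def Wmat {n : ℕ} (A : Matrix (Fin n) (Fin n) ℝ) : Matrix (Fin n) (Fin n) ℝ :=
  Matrix.diagonal (minorDet A)

/-- Mirror adjacency matrix `Â = (W·A + Aᵀ·W)/2`. -/
noncomputable def mirrorAdj {n : ℕ} (A : Matrix (Fin n) (Fin n) ℝ) : Matrix (Fin n) (Fin n) ℝ :=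
  (1/2 : ℝ) • (Wmat A * A + Aᵀ * Wmat A)

/-- Mirror Laplacian `L̂ = (W·L + Lᵀ·W)/2`. -/
noncomputable def mirrorLap {n : ℕ} (A : Matrix (Fin n) (Fin n) ℝ) : Matrix (Fin n) (Fin n) ℝ :=
  (1/2 : ℝ) • (Wmat A * lapOf A + (lapOf A)ᵀ * Wmat A)

/-- `(j, i)` is a directed edge when `a_ij ≠ 0`; strong connectivity: a directed
path between every ordered pair of distinct nodes. -/
def StronglyConnected {n : ℕ} (A : Matrix (Fin n) (Fin n) ℝ) : Prop :=
  ∀ i j : Fin n, i ≠ j → Relation.TransGen (fun u v => A v u ≠ 0) i j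

/-- `σ` is the diagonal of a gauge transformation: each entry is `±1`. -/
def IsGauge {n : ℕ} (σ : Fin n → ℝ) : Prop := ∀ i, σ i = 1 ∨ σ i = -1

/-- Structural balance: there is a gauge transformation `D = diag σ` with all entries
of `D·A·D` (entrywise `σ i * A i j * σ j`) nonnegative. -/
def StructBalanced {n : ℕ} (A : Matrix (Fin n) (Fin n) ℝ) : Prop :=
  ∃ σ : Fin n → ℝ, IsGauge σ ∧ ∀ i j, 0 ≤ σ i * A i j * σ j

/-- Improved Laplacian potential function
`Φ_e(x) = Σ_i Σ_j det(L̄_ii)·|a_ij|·(x_i − sgn(a_ij)·x_j)²`. -/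
noncomputable def PhiE {n : ℕ} (A : Matrix (Fin n) (Fin n) ℝ) (x : Fin n → ℝ) : ℝ :=
  ∑ i, ∑ j, minorDet A i * |A i j| * (x i - Real.sign (A i j) * x j) ^ 2

/-!
Strong connectivity makes every principal minor `det(L̄ᵢᵢ)` positive: along the segment
`Δ - t Ā`, `t ∈ [0, 1]`, the minor never vanishes by a discrete maximum principle (every node
reaches the deleted node `i`), and at `t = 0` it is a product of positive in-degrees.
So `Φ_e` is a positively weighted sum of squares, vanishing exactly at the `x` with
`xᵢ = sgn(aᵢⱼ) xⱼ` along every edge. By strong connectivity such an `x` has constant `|xᵢ|`,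
so a nonzero one rescales to a gauge transformation balancing `G`; conversely a balancing
gauge transformation is such an `x`.
-/

open Relation

section MaximumPrinciple

variable {ι : Type*} [Fintype ι] {B : Matrix ι ι ℝ} {t : ℝ} {i : ι}

lemma rowSum_pos_of_ne_zero (hB : ∀ k j, 0 ≤ B k j) {k u : ι} (hku : B k u ≠ 0) :
    0 < ∑ j, B k j :=
  ((hB k u).lt_of_ne' hku).trans_le
    (Finset.single_le_sum (fun j _ => hB k j) (Finset.mem_univ u))

variable [DecidableEq ι]

lemma mulVec_diagonal_rowSum_sub_smul_apply (B : Matrix ι ι ℝ) (t : ℝ) (w : ι → ℝ) (k : ι) :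
    ((diagonal (fun k => ∑ j, B k j) - t • B) *ᵥ w) k =
      (∑ j, B k j) * w k - t * ∑ j, B k j * w j := by
  rw [sub_mulVec, Pi.sub_apply, mulVec_diagonal, smul_mulVec, Pi.smul_apply, smul_eq_mul]
  rfl

/-- Maximum principle: at a positive maximum `m` of `w`, the row equation
`(∑ⱼ bₖⱼ) m = t ∑ⱼ bₖⱼ wⱼ` forces `w = m` on all out-neighbours, and a path to `i` then
contradicts `w i = 0`. -/
theorem nonpos_of_mulVec_diagonal_rowSum_sub_smul_eq_zero (hB : ∀ k j, 0 ≤ B k j)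
    (hreach : ∀ k, k ≠ i → TransGen (fun u v => B u v ≠ 0) k i) (ht : t ∈ Set.Icc 0 1)
    {w : ι → ℝ} (hw : ∀ k, k ≠ i → ((diagonal (fun k => ∑ j, B k j) - t • B) *ᵥ w) k = 0)
    (hwi : w i = 0) (k : ι) : w k ≤ 0 := by
  by_contra! hk
  have : Nonempty ι := ⟨i⟩
  obtain ⟨k₀, hmax⟩ := Finite.exists_max w
  set m := w k₀
  have hm : 0 < m := hk.trans_le (hmax k)
  have step : ∀ v u, w v = m → B v u ≠ 0 → w u = m := by
    intro v u hv hvu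
    have hrow := hw v (by rintro rfl; linarith)
    rw [mulVec_diagonal_rowSum_sub_smul_apply, hv] at hrow
    have hd := rowSum_pos_of_ne_zero hB hvu
    have hS : ∑ j, B v j * w j ≤ (∑ j, B v j) * m := by
      rw [Finset.sum_mul]
      exact Finset.sum_le_sum fun j _ => mul_le_mul_of_nonneg_left (hmax j) (hB v j)
    have hgap : ∑ j, B v j * (m - w j) = 0 := by
      have : ∑ j, B v j * (m - w j) = (∑ j, B v j) * m - ∑ j, B v j * w j := by
        simp only [mul_sub, Finset.sum_sub_distrib, Finset.sum_mul]
      have hSpos : 0 < ∑ j, B v j * w j :=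
        pos_of_mul_pos_right (by nlinarith [mul_pos hd hm]) ht.1
      have := mul_le_of_le_one_left hSpos.le ht.2
      linarith
    have hu := (Finset.sum_eq_zero_iff_of_nonneg fun j _ =>
      mul_nonneg (hB v j) (sub_nonneg.2 (hmax j))).1 hgap u (Finset.mem_univ u)
    linarith [(mul_eq_zero.1 hu).resolve_left hvu]
  have hpath : ∀ v, TransGen (fun u v => B u v ≠ 0) k₀ v → w v = m := by
    intro v h
    induction h with
    | single h => exact step _ _ rfl h
    | tail _ h ih => exact step _ _ ih h
  linarith [hpath i (hreach k₀ (by rintro rfl; linarith))]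

theorem eq_zero_of_mulVec_diagonal_rowSum_sub_smul_eq_zero (hB : ∀ k j, 0 ≤ B k j)
    (hreach : ∀ k, k ≠ i → TransGen (fun u v => B u v ≠ 0) k i) (ht : t ∈ Set.Icc 0 1)
    {w : ι → ℝ} (hw : ∀ k, k ≠ i → ((diagonal (fun k => ∑ j, B k j) - t • B) *ᵥ w) k = 0)
    (hwi : w i = 0) : w = 0 := by
  funext k
  have hneg := nonpos_of_mulVec_diagonal_rowSum_sub_smul_eq_zero hB hreach ht (w := -w)
    (fun k hk => by rw [mulVec_neg, Pi.neg_apply, hw k hk, neg_zero]) (by simp [hwi]) k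
  exact le_antisymm (nonpos_of_mulVec_diagonal_rowSum_sub_smul_eq_zero hB hreach ht hw hwi k)
    (by simpa using hneg)

lemma sum_mul_dite_eq_sum_subtype (g : ι → ℝ) (y : {k // k ≠ i} → ℝ) :
    ∑ j, g j * (if h : j = i then 0 else y ⟨j, h⟩) = ∑ l : {k // k ≠ i}, g l * y l := by
  refine (Fintype.sum_of_injective _ Subtype.val_injective _ _ (fun j hj => ?_) fun l => ?_).symm
  · have : j = i := by by_contra h; exact hj ⟨⟨j, h⟩, rfl⟩
    simp [this]
  · simp [l.2]

theorem det_submatrix_diagonal_rowSum_sub_smul_ne_zero (hB : ∀ k j, 0 ≤ B k j)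
    (hreach : ∀ k, k ≠ i → TransGen (fun u v => B u v ≠ 0) k i) (ht : t ∈ Set.Icc 0 1) :
    ((diagonal (fun k => ∑ j, B k j) - t • B).submatrix
      ((↑) : {k // k ≠ i} → ι) (↑)).det ≠ 0 := by
  intro hdet
  obtain ⟨y, hy, hMy⟩ := exists_mulVec_eq_zero_iff.2 hdet
  set z : ι → ℝ := fun j => if h : j = i then 0 else y ⟨j, h⟩
  have hz0 : z = 0 := by
    refine eq_zero_of_mulVec_diagonal_rowSum_sub_smul_eq_zero hB hreach ht (fun k hk => ?_)
      (by simp [z])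
    have := congrFun hMy ⟨k, hk⟩
    rw [mulVec, dotProduct] at this ⊢
    rwa [sum_mul_dite_eq_sum_subtype]
  exact hy (funext fun l => by simpa [z, l.2] using congrFun hz0 l)

/-- Deforming `t` from `0` to `1`, the determinant starts at the positive product of the row sums
and never vanishes. -/
theorem det_submatrix_diagonal_rowSum_sub_pos (hB : ∀ k j, 0 ≤ B k j)
    (hreach : ∀ k, k ≠ i → TransGen (fun u v => B u v ≠ 0) k i) :
    0 < ((diagonal (fun k => ∑ j, B k j) - B).submatrix ((↑) : {k // k ≠ i} → ι) (↑)).det := by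
  set f : ℝ → ℝ := fun t =>
    ((diagonal (fun k => ∑ j, B k j) - t • B).submatrix ((↑) : {k // k ≠ i} → ι) (↑)).det
  have hf : Continuous f := by
    refine Continuous.matrix_det (continuous_matrix fun k l => ?_)
    simp only [submatrix_apply, Matrix.sub_apply, Matrix.smul_apply, smul_eq_mul]
    fun_prop
  have hf0 : 0 < f 0 := by
    simp only [f, zero_smul, sub_zero, submatrix_diagonal _ _ Subtype.val_injective, det_diagonal]
    refine Finset.prod_pos fun k _ => ?_
    obtain ⟨u, hku, -⟩ := TransGen.head'_iff.1 (hreach k k.2)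
    exact rowSum_pos_of_ne_zero hB hku
  by_contra! hf1
  obtain ⟨s, hs, hfs⟩ := intermediate_value_Icc' zero_le_one hf.continuousOn
    ⟨by simpa [f] using hf1, hf0.le⟩
  exact det_submatrix_diagonal_rowSum_sub_smul_ne_zero hB hreach hs hfs

end MaximumPrinciple

variable {n : ℕ} {A : Matrix (Fin n) (Fin n) ℝ} {x σ : Fin n → ℝ}

theorem minorDet_pos (hsc : StronglyConnected A) (i : Fin n) : 0 < minorDet A i :=
  det_submatrix_diagonal_rowSum_sub_pos (B := of fun i j => |A i j|) (fun _ _ => abs_nonneg _)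
    fun k hk =>
      TransGen.mono (fun _ _ h => abs_ne_zero.2 h) _ _ (transGen_swap.2 (hsc i k hk.symm))

def SignConsistent (A : Matrix (Fin n) (Fin n) ℝ) (x : Fin n → ℝ) : Prop :=
  ∀ i j, A i j ≠ 0 → x i = Real.sign (A i j) * x j

theorem phiE_nonneg (hW : ∀ i, 0 ≤ minorDet A i) (x : Fin n → ℝ) : 0 ≤ PhiE A x :=
  Finset.sum_nonneg fun i _ => Finset.sum_nonneg fun j _ => by have := hW i; positivity

theorem phiE_eq_zero_iff (hW : ∀ i, 0 < minorDet A i) : PhiE A x = 0 ↔ SignConsistent A x := by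
  have hterm : ∀ i j, 0 ≤ minorDet A i * |A i j| * (x i - Real.sign (A i j) * x j) ^ 2 :=
    fun i j => by have := hW i; positivity
  simp only [PhiE,
    Finset.sum_eq_zero_iff_of_nonneg (fun i _ => Finset.sum_nonneg fun j _ => hterm i j),
    Finset.sum_eq_zero_iff_of_nonneg (fun j _ => hterm _ j), Finset.mem_univ, true_implies,
    mul_eq_zero, (hW _).ne', false_or, abs_eq_zero, pow_eq_zero_iff two_ne_zero, sub_eq_zero]
  exact forall₂_congr fun i j => or_iff_not_imp_left

theorem IsGauge.ne_zero (hσ : IsGauge σ) (i : Fin n) : σ i ≠ 0 := by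
  rcases hσ i with h | h <;> simp [h]

theorem signConsistent_of_isGauge (hσ : IsGauge σ) (hb : ∀ i j, 0 ≤ σ i * A i j * σ j) :
    SignConsistent A σ := by
  intro i j hij
  have hb := hb i j
  rcases hσ i with hi | hi <;> rcases hσ j with hj | hj <;> rcases hij.lt_or_gt with h | h <;>
    simp only [hi, hj, h, Real.sign_of_neg, Real.sign_of_pos] at hb ⊢ <;> linarith

theorem abs_eq_abs_of_signConsistent (hsc : StronglyConnected A) (hx : SignConsistent A x)
    (u v : Fin n) : |x u| = |x v| := by
  have step : ∀ a b, A b a ≠ 0 → |x b| = |x a| := fun a b hba => by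
    rw [hx b a hba, abs_mul]
    rcases Real.sign_apply_eq_of_ne_zero _ hba with h | h <;> simp [h]
  have hpath : ∀ v, TransGen (fun a b => A b a ≠ 0) u v → |x u| = |x v| := by
    intro v h
    induction h with
    | single h => exact (step _ _ h).symm
    | tail _ h ih => exact ih.trans (step _ _ h).symm
  rcases eq_or_ne u v with rfl | huv
  · rfl
  · exact hpath v (hsc u v huv)

theorem structBalanced_of_signConsistent (hsc : StronglyConnected A) (hx0 : x ≠ 0)
    (hx : SignConsistent A x) : StructBalanced A := by
  obtain ⟨p, hp⟩ := Function.ne_iff.1 hx0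
  have hc : 0 < |x p| := abs_pos.2 hp
  refine ⟨fun j => x j / |x p|, fun j => ?_, fun i j => ?_⟩
  · rcases abs_eq hc.le |>.1 (abs_eq_abs_of_signConsistent hsc hx j p) with h | h <;>
      simp [h, hc.ne']
  · by_cases hij : A i j = 0
    · simp [hij]
    · calc (0 : ℝ) ≤ Real.sign (A i j) * A i j * (x j / |x p|) ^ 2 :=
            mul_nonneg (Real.sign_mul_nonneg _) (sq_nonneg _)
        _ = x i / |x p| * A i j * (x j / |x p|) := by rw [hx i j hij]; ring

theorem unbalanced_iff_phiE_posdef_general (n : ℕ) (hn : 2 ≤ n)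
    (A : Matrix (Fin n) (Fin n) ℝ)
    (hsc : StronglyConnected A) :
    ¬ StructBalanced A ↔ ∀ x : Fin n → ℝ, x ≠ 0 → 0 < PhiE A x := by
  have hW := minorDet_pos hsc
  constructor
  · intro hnb x hx
    refine (phiE_nonneg (fun i => (hW i).le) x).lt_of_ne' fun h => hnb ?_
    exact structBalanced_of_signConsistent hsc hx ((phiE_eq_zero_iff hW).1 h)
  · rintro hpos ⟨σ, hσ, hb⟩
    have hσ0 : σ ≠ 0 := fun h => hσ.ne_zero ⟨0, by omega⟩ (congrFun h _)
    have := hpos σ hσ0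
    rw [(phiE_eq_zero_iff hW).2 (signConsistent_of_isGauge hσ hb)] at this
    exact this.false

/-- `G` is structurally unbalanced iff `Φ_e` is positive definite. -/
theorem unbalanced_iff_phiE_posdef (n : ℕ) (hn : 2 ≤ n)
    (A : Matrix (Fin n) (Fin n) ℝ)
    (hdiag : ∀ i, A i i = 0) (hdigon : ∀ i j, 0 ≤ A i j * A j i)
    (hsc : StronglyConnected A) :
    ¬ StructBalanced A ↔ ∀ x : Fin n → ℝ, x ≠ 0 → 0 < PhiE A x :=
  unbalanced_iff_phiE_posdef_general n hn A hsc
end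

section
/- Let G be a strongly connected signed digraph. Then G is structurally unbalanced if and only if every complex eigenvalue of the matrix W·L has strictly positive real part. -/
open Matrix BigOperators Filter

/-!
Put `w i = det L̄ᵢᵢ`. Strong connectivity makes every `w i` positive: deforming `Δ` into `L̄`
through `Δ - t Ā`, a discrete maximum principle keeps each principal minor nonsingular. It also
makes `w` a left null vector of `L̄`, because the adjugate of the singular matrix `L̄` has
constant columns. Hence `xᵀ W L x = Φₑ(x) / 2`, a sum of the nonnegative terms
`w i |a i j| (x i - sgn (a i j) x j)²`, and `Φₑ` vanishes at some `x ≠ 0` only if `|x i|` is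
a constant `c > 0` and `x / c` is a balancing gauge. So for an unbalanced graph the symmetric part of `W L` is positive definite,
which pushes its spectrum into the right half-plane; for a balanced one the gauge vector lies in
the kernel of `L`, and `0` is an eigenvalue.
-/

namespace Matrix

variable {ι : Type*} [Fintype ι] [DecidableEq ι]

theorem exists_mulVec_eq_zero_of_det_submatrix_eq_zero {K : Type*} [Field K] (M : Matrix ι ι K)
    (i : ι) (h : (M.submatrix ((↑) : {j // j ≠ i} → ι) (↑)).det = 0) :
    ∃ y ≠ 0, y i = 0 ∧ ∀ k ≠ i, (M *ᵥ y) k = 0 := by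
  obtain ⟨x, hx, hMx⟩ := exists_mulVec_eq_zero_iff.mpr h
  refine ⟨fun j => if h : j = i then 0 else x ⟨j, h⟩, fun hy => hx (funext fun j => ?_),
    dif_pos rfl, fun k hk => ?_⟩
  · simpa [j.2] using congrFun hy j
  · have hrow := congrFun hMx ⟨k, hk⟩
    simp only [mulVec, dotProduct, submatrix_apply, Pi.zero_apply] at hrow
    rw [mulVec, dotProduct, Fintype.sum_eq_add_sum_subtype_ne _ i, dif_pos rfl, mul_zero,
      zero_add, ← hrow]
    exact Finset.sum_congr rfl fun j _ => by rw [dif_neg j.2]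

theorem isRoot_charpoly_iff_exists_mulVec_eq_smul {K : Type*} [Field K] (M : Matrix ι ι K)
    (μ : K) : M.charpoly.IsRoot μ ↔ ∃ v ≠ 0, M *ᵥ v = μ • v := by
  rw [Polynomial.IsRoot, eval_charpoly, ← exists_mulVec_eq_zero_iff]
  simp only [sub_mulVec, scalar_apply, ← smul_one_eq_diagonal, smul_mulVec, one_mulVec,
    sub_eq_zero, eq_comm]

theorem re_pos_of_isRoot_charpoly_map_ofReal {B : Matrix ι ι ℝ}
    (hB : ∀ x ≠ 0, 0 < x ⬝ᵥ B *ᵥ x) {μ : ℂ} (hμ : (B.map Complex.ofReal).charpoly.IsRoot μ) :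
    0 < μ.re := by
  obtain ⟨v, hv, hBv⟩ := ((B.map Complex.ofReal).isRoot_charpoly_iff_exists_mulVec_eq_smul μ).mp hμ
  set a : ι → ℝ := fun k => (v k).re
  set b : ι → ℝ := fun k => (v k).im
  have hre : B *ᵥ a = μ.re • a - μ.im • b := by
    ext k
    simpa [mulVec, dotProduct, Complex.re_sum] using congrArg Complex.re (congrFun hBv k)
  have him : B *ᵥ b = μ.im • a + μ.re • b := by
    ext k
    simpa [mulVec, dotProduct, Complex.im_sum, add_comm] using
      congrArg Complex.im (congrFun hBv k)
  have hquad : a ⬝ᵥ B *ᵥ a + b ⬝ᵥ B *ᵥ b = μ.re * (a ⬝ᵥ a + b ⬝ᵥ b) := by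
    rw [hre, him]
    simp only [dotProduct_sub, dotProduct_add, dotProduct_smul, smul_eq_mul, dotProduct_comm b a]
    ring
  have hB' : ∀ x : ι → ℝ, 0 ≤ x ⬝ᵥ B *ᵥ x := fun x => by
    rcases eq_or_ne x 0 with rfl | hx
    · simp
    · exact (hB x hx).le
  have hpos : 0 < a ⬝ᵥ B *ᵥ a + b ⬝ᵥ B *ᵥ b := by
    by_cases ha : a = 0
    · have hb : b ≠ 0 := fun hb => hv (funext fun k =>
        Complex.ext (congrFun ha k) (congrFun hb k))
      exact add_pos_of_nonneg_of_pos (hB' a) (hB b hb)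
    · exact add_pos_of_pos_of_nonneg (hB a ha) (hB' b)
  have hnorm : ∀ x : ι → ℝ, 0 ≤ x ⬝ᵥ x := fun x =>
    Finset.sum_nonneg fun k _ => mul_self_nonneg (x k)
  rw [hquad] at hpos
  exact pos_of_mul_pos_left hpos (add_nonneg (hnorm a) (hnorm b))

theorem isRoot_charpoly_map_ofReal_zero {B : Matrix ι ι ℝ} {x : ι → ℝ} (hx : x ≠ 0)
    (hBx : B *ᵥ x = 0) : (B.map Complex.ofReal).charpoly.IsRoot 0 := by
  refine ((B.map Complex.ofReal).isRoot_charpoly_iff_exists_mulVec_eq_smul 0).mpr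
    ⟨fun k => x k, fun h => hx (funext fun k => by simpa using congrFun h k), ?_⟩
  ext k
  simpa [mulVec, dotProduct] using congrArg Complex.ofReal (congrFun hBx k)

theorem adjugate_apply_self {R : Type*} [CommRing R] {n : ℕ} (M : Matrix (Fin n) (Fin n) R)
    (i : Fin n) : M.adjugate i i = (M.submatrix ((↑) : {j // j ≠ i} → Fin n) (↑)).det := by
  obtain ⟨m, rfl⟩ : ∃ m, n = m + 1 := ⟨n - 1, by have := i.pos; omega⟩
  rw [adjugate_fin_succ_eq_det_submatrix, Even.neg_one_pow ⟨i, rfl⟩, one_mul,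
    ← det_submatrix_equiv_self (finSuccAboveEquiv i)]
  rfl

end Matrix

theorem abs_mul_sub_sign_mul_sq (a u v : ℝ) :
    |a| * (u - Real.sign a * v) ^ 2 = |a| * u ^ 2 - 2 * (a * u * v) + |a| * v ^ 2 := by
  rcases lt_trichotomy a 0 with h | rfl | h
  · rw [Real.sign_of_neg h, abs_of_neg h]; ring
  · simp
  · rw [Real.sign_of_pos h, abs_of_pos h]; ring

noncomputable def scaledLapBar {n : ℕ} (A : Matrix (Fin n) (Fin n) ℝ) (t : ℝ) :
    Matrix (Fin n) (Fin n) ℝ :=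
  Matrix.diagonal (inDeg A) - t • Matrix.of (fun i j => |A i j|)

section Laplacians

variable {n : ℕ} {A : Matrix (Fin n) (Fin n) ℝ}

theorem lapBar_eq_scaledLapBar_one (A : Matrix (Fin n) (Fin n) ℝ) :
    lapBar A = scaledLapBar A 1 := by
  rw [scaledLapBar, one_smul, lapBar]

theorem scaledLapBar_mulVec_apply (t : ℝ) (y : Fin n → ℝ) (k : Fin n) :
    (scaledLapBar A t *ᵥ y) k = inDeg A k * y k - t * ∑ j, |A k j| * y j := by
  rw [scaledLapBar, sub_mulVec, smul_mulVec, Pi.sub_apply, mulVec_diagonal, Pi.smul_apply,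
    smul_eq_mul]
  rfl

theorem lapBar_mulVec_one (A : Matrix (Fin n) (Fin n) ℝ) : lapBar A *ᵥ (fun _ => 1) = 0 := by
  ext k
  simp [lapBar_eq_scaledLapBar_one, scaledLapBar_mulVec_apply, inDeg]

theorem lapOf_mulVec_eq_zero_of_gauge {σ : Fin n → ℝ} (hσ : IsGauge σ)
    (hA : ∀ i j, 0 ≤ σ i * A i j * σ j) : lapOf A *ᵥ σ = 0 := by
  have hsq : ∀ k, σ k * σ k = 1 := fun k => by rcases hσ k with h | h <;> simp [h]
  have habs : ∀ k, |σ k| = 1 := fun k => by rcases hσ k with h | h <;> simp [h]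
  have hcol : ∀ k j, A k j * σ j = σ k * |A k j| := fun k j =>
    calc A k j * σ j = σ k * (σ k * A k j * σ j) := by
          linear_combination (-(A k j * σ j)) * hsq k
      _ = σ k * |A k j| := by
          rw [← abs_of_nonneg (hA k j), abs_mul, abs_mul, habs, habs]; ring
  ext k
  rw [lapOf, sub_mulVec, Pi.sub_apply, mulVec_diagonal, Pi.zero_apply, mulVec, dotProduct]
  simp only [hcol, ← Finset.mul_sum]
  rw [inDeg]
  ring

end Laplacians

namespace StronglyConnected

variable {n : ℕ} {A : Matrix (Fin n) (Fin n) ℝ}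

theorem mem_of_forall_adj_mem (hsc : StronglyConnected A) {S : Set (Fin n)}
    (hS : ∀ k ∈ S, ∀ j, A k j ≠ 0 → j ∈ S) {k₀ : Fin n} (hk₀ : k₀ ∈ S) (l : Fin n) : l ∈ S := by
  rcases eq_or_ne l k₀ with rfl | hne
  · exact hk₀
  have hpath := hsc l k₀ hne
  clear hne
  induction hpath using Relation.TransGen.head_induction_on with
  | single h => exact hS _ hk₀ _ h
  | head h _ ih => exact hS _ ih _ h

theorem inDeg_pos (hsc : StronglyConnected A) (hn : 2 ≤ n) (i : Fin n) : 0 < inDeg A i := by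
  obtain ⟨k, hk⟩ := Fintype.exists_ne_of_one_lt_card (by simp; omega) i
  obtain ⟨j, -, hj⟩ := Relation.TransGen.tail'_iff.mp (hsc k i hk)
  exact (abs_pos.mpr hj).trans_le
    (Finset.single_le_sum (fun j _ => abs_nonneg (A i j)) (Finset.mem_univ j))

/-- Discrete maximum principle. -/
theorem eq_of_inDeg_mul_le_sum (hsc : StronglyConnected A) {f : Fin n → ℝ} {k₀ : Fin n}
    (hmax : ∀ j, f j ≤ f k₀)
    (hsub : ∀ k, f k = f k₀ → inDeg A k * f k ≤ ∑ j, |A k j| * f j) (l : Fin n) :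
    f l = f k₀ := by
  refine hsc.mem_of_forall_adj_mem (S := {k | f k = f k₀}) (fun k hk j hj => ?_) rfl l
  have hgap : ∑ j, |A k j| * (f k₀ - f j) = 0 := by
    refine le_antisymm ?_ (Finset.sum_nonneg fun j _ => ?_)
    · have := hsub k hk
      rw [show f k = f k₀ from hk, inDeg, Finset.sum_mul] at this
      simp only [mul_sub, Finset.sum_sub_distrib]
      linarith
    · exact mul_nonneg (abs_nonneg _) (sub_nonneg.mpr (hmax j))
  have := (Finset.sum_eq_zero_iff_of_nonneg fun j _ =>
    mul_nonneg (abs_nonneg (A k j)) (sub_nonneg.mpr (hmax j))).mp hgap j (Finset.mem_univ j)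
  simpa [hj, sub_eq_zero, eq_comm] using this

theorem eq_of_lapBar_mulVec_eq_zero (hsc : StronglyConnected A) (hn : 2 ≤ n)
    {v : Fin n → ℝ} (hv : lapBar A *ᵥ v = 0) (k l : Fin n) : v k = v l := by
  have : Nonempty (Fin n) := ⟨⟨0, by omega⟩⟩
  obtain ⟨k₀, hk₀⟩ := Finite.exists_max v
  have harmonic : ∀ k, inDeg A k * v k = ∑ j, |A k j| * v j := fun k => by
    have := congrFun hv k
    rw [lapBar_eq_scaledLapBar_one, scaledLapBar_mulVec_apply, one_mul] at this
    simpa [sub_eq_zero] using this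
  have hconst := hsc.eq_of_inDeg_mul_le_sum hk₀ fun k _ => (harmonic k).le
  rw [hconst k, hconst l]

/-- A kernel vector of the minor, extended by `0` at `i`, has `|y|` maximal somewhere; the
maximum principle spreads the maximum to `i`, where `y` vanishes. -/
theorem det_scaledLapBar_submatrix_ne_zero (hsc : StronglyConnected A) (hn : 2 ≤ n)
    (i : Fin n) {t : ℝ} (ht₀ : 0 ≤ t) (ht₁ : t ≤ 1) :
    ((scaledLapBar A t).submatrix ((↑) : {j // j ≠ i} → Fin n) (↑)).det ≠ 0 := by
  intro hdet
  obtain ⟨y, hy, hyi, hky⟩ :=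
    (scaledLapBar A t).exists_mulVec_eq_zero_of_det_submatrix_eq_zero i hdet
  have : Nonempty (Fin n) := ⟨i⟩
  obtain ⟨k₀, hk₀⟩ := Finite.exists_max fun k => |y k|
  have hmax_pos : 0 < |y k₀| := by
    obtain ⟨u, hu⟩ := Function.ne_iff.mp hy
    exact (abs_pos.mpr hu).trans_le (hk₀ u)
  have hsub : ∀ k, |y k| = |y k₀| → inDeg A k * |y k| ≤ ∑ j, |A k j| * |y j| := by
    intro k hk
    have hki : k ≠ i := by rintro rfl; simp [hyi, ← hk] at hmax_pos
    have hrow := hky k hki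
    rw [scaledLapBar_mulVec_apply, sub_eq_zero] at hrow
    calc inDeg A k * |y k| = t * |∑ j, |A k j| * y j| := by
          rw [← abs_of_pos (hsc.inDeg_pos hn k), ← abs_mul, hrow, abs_mul, abs_of_nonneg ht₀]
      _ ≤ 1 * ∑ j, |A k j| * |y j| := by
          gcongr
          refine (Finset.abs_sum_le_sum_abs _ _).trans_eq ?_
          simp [abs_mul]
      _ = _ := one_mul _
  have := hsc.eq_of_inDeg_mul_le_sum hk₀ hsub i
  rw [hyi, abs_zero] at this
  exact hmax_pos.ne this

theorem minorDet_pos (hsc : StronglyConnected A) (hn : 2 ≤ n) (i : Fin n) :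
    0 < minorDet A i := by
  set d : ℝ → ℝ := fun t => ((scaledLapBar A t).submatrix ((↑) : {j // j ≠ i} → Fin n) (↑)).det
  have hd₀ : 0 < d 0 := by
    simp only [d, scaledLapBar, zero_smul, sub_zero]
    rw [submatrix_diagonal _ _ Subtype.val_injective, det_diagonal]
    exact Finset.prod_pos fun k _ => hsc.inDeg_pos hn k
  have hcont : Continuous d := by
    unfold d scaledLapBar
    fun_prop
  rw [minorDet, lapBar_eq_scaledLapBar_one]
  by_contra! hd₁
  obtain ⟨t, ⟨ht₀, ht₁⟩, hdt⟩ :=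
    intermediate_value_Icc' zero_le_one hcont.continuousOn ⟨hd₁, hd₀.le⟩
  exact hsc.det_scaledLapBar_submatrix_ne_zero hn i ht₀ ht₁ hdt

/-- `L̄ adj L̄ = 0` puts the columns of `adj L̄` in the kernel of `L̄`, so they are constant and
every row of `adj L̄` is `w`; then `adj L̄ · L̄ = 0` says `wᵀ L̄ = 0`. -/
theorem minorDet_vecMul_lapBar (hsc : StronglyConnected A) (hn : 2 ≤ n) :
    minorDet A ᵥ* lapBar A = 0 := by
  have hdet : (lapBar A).det = 0 :=
    exists_mulVec_eq_zero_iff.mp ⟨_, fun h => one_ne_zero (congrFun h ⟨0, by omega⟩),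
      lapBar_mulVec_one A⟩
  have hadj : ∀ k j, (lapBar A).adjugate k j = minorDet A j := fun k j => by
    have hcol : lapBar A *ᵥ ((lapBar A).adjugate *ᵥ Pi.single j 1) = 0 := by
      rw [mulVec_mulVec, mul_adjugate, hdet, zero_smul, zero_mulVec]
    rw [mulVec_single_one] at hcol
    rw [minorDet, ← adjugate_apply_self]
    exact hsc.eq_of_lapBar_mulVec_eq_zero hn hcol k j
  have hrow : minorDet A = (lapBar A).adjugate ⟨0, by omega⟩ := funext fun j => (hadj _ j).symm
  rw [hrow, ← mul_apply_eq_vecMul, adjugate_mul, hdet, zero_smul]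
  rfl

theorem sum_minorDet_mul_abs (hsc : StronglyConnected A) (hn : 2 ≤ n) (j : Fin n) :
    ∑ i, minorDet A i * |A i j| = minorDet A j * inDeg A j := by
  have := congrFun (hsc.minorDet_vecMul_lapBar hn) j
  rw [lapBar, vecMul_sub, Pi.sub_apply, vecMul_diagonal, Pi.zero_apply, sub_eq_zero] at this
  exact this.symm

theorem PhiE_eq_two_mul_dotProduct (hsc : StronglyConnected A) (hn : 2 ≤ n) (x : Fin n → ℝ) :
    PhiE A x = 2 * (x ⬝ᵥ (Wmat A * lapOf A) *ᵥ x) := by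
  have hWL : ∀ i, ((Wmat A * lapOf A) *ᵥ x) i
      = minorDet A i * (inDeg A i * x i - ∑ j, A i j * x j) := fun i => by
    rw [← mulVec_mulVec, Wmat, mulVec_diagonal, lapOf, sub_mulVec, Pi.sub_apply, mulVec_diagonal]
    rfl
  have hrow : ∑ i, ∑ j, minorDet A i * |A i j| * x i ^ 2
      = ∑ i, minorDet A i * inDeg A i * x i ^ 2 := by
    simp_rw [inDeg, Finset.mul_sum, Finset.sum_mul]
  have hcol : ∑ i, ∑ j, minorDet A i * |A i j| * x j ^ 2
      = ∑ i, minorDet A i * inDeg A i * x i ^ 2 := by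
    rw [Finset.sum_comm]
    simp_rw [← Finset.sum_mul, hsc.sum_minorDet_mul_abs hn]
  calc PhiE A x = ∑ i, ∑ j, minorDet A i * |A i j| * x i ^ 2
        + ∑ i, ∑ j, minorDet A i * |A i j| * x j ^ 2
        - 2 * ∑ i, minorDet A i * x i * ∑ j, A i j * x j := by
        simp only [Finset.mul_sum, ← Finset.sum_add_distrib, ← Finset.sum_sub_distrib, PhiE]
        refine Finset.sum_congr rfl fun i _ => Finset.sum_congr rfl fun j _ => ?_
        rw [mul_assoc, abs_mul_sub_sign_mul_sq]
        ring
    _ = 2 * ∑ i, minorDet A i * inDeg A i * x i ^ 2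
        - 2 * ∑ i, minorDet A i * x i * ∑ j, A i j * x j := by
        rw [hrow, hcol]
        ring
    _ = 2 * (x ⬝ᵥ (Wmat A * lapOf A) *ᵥ x) := by
        rw [← mul_sub, ← Finset.sum_sub_distrib, dotProduct]
        congr 1
        refine Finset.sum_congr rfl fun i _ => ?_
        rw [hWL]
        ring

theorem PhiE_nonneg (hsc : StronglyConnected A) (hn : 2 ≤ n) (x : Fin n → ℝ) :
    0 ≤ PhiE A x :=
  Finset.sum_nonneg fun i _ => Finset.sum_nonneg fun j _ => by
    have := hsc.minorDet_pos hn i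
    positivity

theorem structBalanced_of_PhiE_eq_zero (hsc : StronglyConnected A) (hn : 2 ≤ n)
    {x : Fin n → ℝ} (hx : x ≠ 0) (hΦ : PhiE A x = 0) : StructBalanced A := by
  have hedge : ∀ i j, A i j ≠ 0 → x i = Real.sign (A i j) * x j := by
    intro i j hij
    have hw := hsc.minorDet_pos hn i
    have hrow := (Fintype.sum_eq_zero_iff_of_nonneg fun i => Finset.sum_nonneg fun j _ => by
      have := hsc.minorDet_pos hn i
      positivity).mp hΦ
    have hterm := (Fintype.sum_eq_zero_iff_of_nonneg fun j => by positivity).mp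
      (congrFun hrow i)
    simpa [hw.ne', hij, sub_eq_zero] using congrFun hterm j
  obtain ⟨u, hu⟩ := Function.ne_iff.mp hx
  have habs : ∀ l, |x l| = |x u| := by
    refine hsc.mem_of_forall_adj_mem (S := {k | |x k| = |x u|}) (fun k hk j hj => ?_) rfl
    rcases Real.sign_apply_eq_of_ne_zero _ hj with h | h <;>
      simpa [hedge k j hj, h, abs_mul] using hk
  have hc : 0 < |x u| := abs_pos.mpr hu
  refine ⟨fun k => x k / |x u|, fun k => ?_, fun i j => ?_⟩
  · rcases abs_eq hc.le |>.mp (habs k) with h | h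
    · exact .inl (by simp only [h, div_self hc.ne'])
    · exact .inr (by simp only [h, neg_div, div_self hc.ne'])
  · by_cases hij : A i j = 0
    · simp [hij]
    · have : 0 ≤ x i * A i j * x j := by
        rw [hedge i j hij, show Real.sign (A i j) * x j * A i j * x j
          = Real.sign (A i j) * A i j * (x j * x j) by ring]
        exact mul_nonneg (Real.sign_mul_nonneg _) (mul_self_nonneg _)
      calc (0 : ℝ) ≤ x i * A i j * x j / (|x u| * |x u|) := by positivity
        _ = _ := by ring

theorem dotProduct_WL_mulVec_pos (hsc : StronglyConnected A) (hn : 2 ≤ n)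
    (hA : ¬ StructBalanced A) {x : Fin n → ℝ} (hx : x ≠ 0) :
    0 < x ⬝ᵥ (Wmat A * lapOf A) *ᵥ x := by
  have hΦ := hsc.PhiE_nonneg hn x
  have hΦ' : PhiE A x ≠ 0 := fun h => hA (hsc.structBalanced_of_PhiE_eq_zero hn hx h)
  rw [hsc.PhiE_eq_two_mul_dotProduct hn] at hΦ hΦ'
  exact (mul_pos_iff_of_pos_left two_pos).mp (lt_of_le_of_ne hΦ hΦ'.symm)

end StronglyConnected

theorem unbalanced_iff_WL_spectrum_general (n : ℕ) (hn : 2 ≤ n)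
    (A : Matrix (Fin n) (Fin n) ℝ)
    (hsc : StronglyConnected A) :
    ¬ StructBalanced A ↔
      ∀ μ : ℂ, (((Wmat A * lapOf A).map Complex.ofReal).charpoly).IsRoot μ → 0 < μ.re := by
  constructor
  · intro hA _ hμ
    exact re_pos_of_isRoot_charpoly_map_ofReal
      (fun _ hx => hsc.dotProduct_WL_mulVec_pos hn hA hx) hμ
  · rintro hspec ⟨σ, hσ, hσA⟩
    have hσ0 : σ ≠ 0 := fun h => by rcases hσ ⟨0, by omega⟩ with h1 | h1 <;> simp [h] at h1
    have hWLσ : (Wmat A * lapOf A) *ᵥ σ = 0 := by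
      rw [← mulVec_mulVec, lapOf_mulVec_eq_zero_of_gauge hσ hσA, mulVec_zero]
    exact lt_irrefl _ (hspec 0 (isRoot_charpoly_map_ofReal_zero hσ0 hWLσ))

/-- `G` is structurally unbalanced iff every complex eigenvalue of `W·L`
has strictly positive real part. -/
theorem unbalanced_iff_WL_spectrum (n : ℕ) (hn : 2 ≤ n)
    (A : Matrix (Fin n) (Fin n) ℝ)
    (hdiag : ∀ i, A i i = 0) (hdigon : ∀ i j, 0 ≤ A i j * A j i)
    (hsc : StronglyConnected A) :
    ¬ StructBalanced A ↔
      ∀ μ : ℂ, (((Wmat A * lapOf A).map Complex.ofReal).charpoly).IsRoot μ → 0 < μ.re :=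
  unbalanced_iff_WL_spectrum_general n hn A hsc
end
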